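/- arXiv:1510.08781 — 2 statements merged into one kernel-verified Lean document; each statement's English description precedes it below -/
import Mathlib

section
/- For every g ∈ F and every x ∈ [ω]^ω, ρ(g·x, x) = ρ(g, ω). Consequently F is closed under the operation ·, and so (F, ·, ω) is a submonoid of ([ω]^ω, ·, ω). -/
open MeasureTheory Filter Set
open scoped ENNReal

noncomputable section

/-- `fEnum x` is the increasing enumeration `f_x : ω → ω` of the set `x ∈ [ω]^ω`. -/
def fEnum (x : Set ℕ) : ℕ → ℕ := Nat.nth (· ∈ x)

/-- The sequence `α^x ∈ [1/4,3/4]^ω` attached to `x ∈ [ω]^ω`: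
`α^x_n = 1/4 + 1/(2·√(f_x⁻¹(n)+1))` if `n ∈ x` and `α^x_n = 1/4` otherwise
(for `n ∈ x`, `f_x⁻¹(n)` is the number of elements of `x` below `n`). -/
noncomputable def alphaSeq (x : Set ℕ) (n : ℕ) : ℝ :=
  haveI := Classical.decPred (· ∈ x)
  if n ∈ x then 1/4 + 1/(2 * Real.sqrt ((Nat.count (· ∈ x) n : ℝ) + 1)) else 1/4

/-- `ρ(x,y) = Σ_n (α^x_n - α^y_n)² ∈ [0,∞]`. -/
noncomputable def rho (x y : Set ℕ) : ℝ≥0∞ :=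
  ∑' n : ℕ, ENNReal.ofReal ((alphaSeq x n - alphaSeq y n)^2)

/-- `F = {g ∈ [ω]^ω : ρ(g,ω) < ∞}`. -/
def Fset : Set (Set ℕ) := {g | g.Infinite ∧ rho g Set.univ < ⊤}

/-- The monoid operation `x · y = (f_y ∘ f_x)[ω]`. -/
def dotOp (x y : Set ℕ) : Set ℕ := Set.range (fEnum y ∘ fEnum x)

/-- `IsKakutaniProduct x μ` says that `μ` is the product measure
`μ^x = ∏_n (α^x_n δ_0 + (1 - α^x_n) δ_1)` on Cantor space `2^ω = ℕ → Bool`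
(identifying `0` with `false` and `1` with `true`), i.e. `μ` is the Borel
probability measure giving each finite cylinder the corresponding product of
the coordinate weights.  These conditions determine `μ^x` uniquely. -/
def IsKakutaniProduct (x : Set ℕ) (μ : Measure (ℕ → Bool)) : Prop :=
  IsProbabilityMeasure μ ∧
    ∀ (s : Finset ℕ) (f : ℕ → Bool),
      μ {g | ∀ n ∈ s, g n = f n} =
        ∏ n ∈ s, (if f n = false then ENNReal.ofReal (alphaSeq x n)
                  else ENNReal.ofReal (1 - alphaSeq x n))

/-- The subset of `ℕ` coded by a point of Cantor space. -/
def toSet (f : ℕ → Bool) : Set ℕ := {n | f n = true}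

/-!
Renaming the points of `ℕ` along a strictly increasing map `f` preserves both membership and the
rank of a point inside a set, so `α^{f[a]}_{f m} = α^a_m`, while off the range of `f` every `α^{f[a]}`
equals `1/4`; hence `ρ(f[a], f[b]) = ρ(a, b)`. For infinite `g` and `x` we have `g · x = f_x[g]` and
`x = f_x[ω]`, so `ρ(g · x, x) = ρ(g, ω)`. Closure of `F` then follows from the quasi-triangle
inequality `ρ(a, c) ≤ 2ρ(a, b) + 2ρ(b, c)`.
-/

lemma count_image_of_strictMono {f : ℕ → ℕ} (hf : StrictMono f) (x : Set ℕ)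
    [DecidablePred (· ∈ f '' x)] [DecidablePred (· ∈ x)] (m : ℕ) :
    Nat.count (· ∈ f '' x) (f m) = Nat.count (· ∈ x) m := by
  simp only [Nat.count_eq_card_filter_range]
  conv_rhs => rw [← Finset.card_image_of_injective _ hf.injective]
  congr 1
  ext k
  simp only [Finset.mem_filter, Finset.mem_range, Finset.mem_image, Set.mem_image]
  constructor
  · rintro ⟨hk, j, hj, rfl⟩
    exact ⟨j, ⟨hf.lt_iff_lt.mp hk, hj⟩, rfl⟩
  · rintro ⟨j, ⟨hj, hjx⟩, rfl⟩
    exact ⟨hf hj, j, hjx, rfl⟩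

lemma alphaSeq_of_notMem {x : Set ℕ} {n : ℕ} (hn : n ∉ x) : alphaSeq x n = 1/4 := by
  simp [alphaSeq, hn]

lemma alphaSeq_image_of_strictMono {f : ℕ → ℕ} (hf : StrictMono f) (x : Set ℕ) (m : ℕ) :
    alphaSeq (f '' x) (f m) = alphaSeq x m := by
  classical
  rw [alphaSeq, alphaSeq, count_image_of_strictMono hf]
  simp only [hf.injective.mem_set_image]

lemma rho_image_of_strictMono {f : ℕ → ℕ} (hf : StrictMono f) (a b : Set ℕ) :
    rho (f '' a) (f '' b) = rho a b := by
  have hsupp : Function.support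
      (fun n => ENNReal.ofReal ((alphaSeq (f '' a) n - alphaSeq (f '' b) n) ^ 2)) ⊆
      Set.range f := by
    intro n hn
    by_contra hnf
    have hout : ∀ s : Set ℕ, n ∉ f '' s := fun s ⟨j, _, hj⟩ => hnf ⟨j, hj⟩
    simp [alphaSeq_of_notMem (hout a), alphaSeq_of_notMem (hout b)] at hn
  rw [rho, ← hf.injective.tsum_eq hsupp]
  simp only [alphaSeq_image_of_strictMono hf, rho]

lemma fEnum_strictMono {x : Set ℕ} (hx : x.Infinite) : StrictMono (fEnum x) :=
  Nat.nth_strictMono hx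

lemma range_fEnum {x : Set ℕ} (hx : x.Infinite) : Set.range (fEnum x) = x :=
  Nat.range_nth_of_infinite (p := (· ∈ x)) hx

lemma dotOp_eq_image {g x : Set ℕ} (hg : g.Infinite) : dotOp g x = fEnum x '' g := by
  rw [dotOp, Set.range_comp, range_fEnum hg]

lemma rho_dotOp {g x : Set ℕ} (hg : g.Infinite) (hx : x.Infinite) :
    rho (dotOp g x) x = rho g Set.univ := by
  have h := rho_image_of_strictMono (fEnum_strictMono hx) g Set.univ
  rwa [Set.image_univ, range_fEnum hx, ← dotOp_eq_image hg] at h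

lemma rho_self (x : Set ℕ) : rho x x = 0 := by
  simp [rho]

lemma rho_le_two_mul_add (a b c : Set ℕ) : rho a c ≤ 2 * rho a b + 2 * rho b c := by
  simp only [rho]
  rw [← ENNReal.tsum_mul_left, ← ENNReal.tsum_mul_left, ← ENNReal.tsum_add]
  refine ENNReal.tsum_le_tsum fun n => ?_
  set u := alphaSeq a n
  set v := alphaSeq b n
  set w := alphaSeq c n
  have hsq : (u - w) ^ 2 ≤ 2 * (u - v) ^ 2 + 2 * (v - w) ^ 2 := by
    nlinarith [sq_nonneg (u - 2 * v + w)]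
  calc ENNReal.ofReal ((u - w) ^ 2)
      ≤ ENNReal.ofReal (2 * (u - v) ^ 2 + 2 * (v - w) ^ 2) := ENNReal.ofReal_le_ofReal hsq
    _ = 2 * ENNReal.ofReal ((u - v) ^ 2) + 2 * ENNReal.ofReal ((v - w) ^ 2) := by
        rw [ENNReal.ofReal_add (by positivity) (by positivity), ENNReal.ofReal_mul zero_le_two,
          ENNReal.ofReal_mul zero_le_two, ENNReal.ofReal_ofNat]

lemma dotOp_mem_Fset {g h : Set ℕ} (hg : g ∈ Fset) (hh : h ∈ Fset) : dotOp g h ∈ Fset := by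
  refine ⟨?_, ?_⟩
  · rw [dotOp_eq_image hg.1]
    exact hg.1.image (fEnum_strictMono hh.1).injective.injOn
  · calc rho (dotOp g h) Set.univ
        ≤ 2 * rho (dotOp g h) h + 2 * rho h Set.univ := rho_le_two_mul_add _ _ _
      _ = 2 * rho g Set.univ + 2 * rho h Set.univ := by rw [rho_dotOp hg.1 hh.1]
      _ < ⊤ := ENNReal.add_lt_top.mpr
          ⟨ENNReal.mul_lt_top ENNReal.ofNat_lt_top hg.2, ENNReal.mul_lt_top ENNReal.ofNat_lt_top hh.2⟩

/-- For every `g ∈ F` and `x ∈ [ω]^ω`, `ρ(g·x, x) = ρ(g, ω)`; consequently `F`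
is closed under `·` and (since `ω ∈ F`) is a submonoid of `([ω]^ω, ·, ω)`. -/
theorem rho_dotOp_eq_and_Fset_closed :
    (∀ g ∈ Fset, ∀ x : Set ℕ, x.Infinite → rho (dotOp g x) x = rho g Set.univ) ∧
    (∀ g ∈ Fset, ∀ h ∈ Fset, dotOp g h ∈ Fset) ∧
    Set.univ ∈ Fset :=
  ⟨fun _ hg _ hx => rho_dotOp hg.1 hx, fun _ hg _ hh => dotOp_mem_Fset hg hh,
    Set.infinite_univ, by simp [rho_self]⟩

end
end

section
/- For every natural number k, the set ω∖k = {n ∈ ω : n ≥ k} belongs to F, i.e., Σ_{n≥k} (1/√(n+1) − 1/√(n+1−k))² < ∞ and hence ρ(ω∖k, ω) < ∞. -/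
open MeasureTheory Filter Set
open scoped ENNReal

noncomputable section

/-!
Write `n = m + k`. Then `α^{ω∖k}_n = 1/4 + 1/(2√(m+1))` and `α^ω_n = 1/4 + 1/(2√(m+k+1))`, so up to
finitely many terms both series are (multiples of) `Σ_m (1/√(m+1) − 1/√(m+1+k))²`. Since
`(a − b)² ≤ a² − b²` for `0 ≤ b ≤ a`, its terms are at most `1/(m+1) − 1/(m+1+k) ≤ k/(m+1)²`.
-/

lemma inv_sqrt_sub_inv_sqrt_add_sq_le {x c : ℝ} (hx : 0 < x) (hc : 0 ≤ c) :
    (1 / √x - 1 / √(x + c)) ^ 2 ≤ c / x ^ 2 := by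
  have hxc : 0 < x + c := by linarith
  have hb : 0 ≤ 1 / √(x + c) := by positivity
  have hba : 1 / √(x + c) ≤ 1 / √x :=
    one_div_le_one_div_of_le (Real.sqrt_pos.mpr hx) (Real.sqrt_le_sqrt (by linarith))
  calc (1 / √x - 1 / √(x + c)) ^ 2
      ≤ (1 / √x - 1 / √(x + c)) * (1 / √x + 1 / √(x + c)) := by nlinarith
    _ = (1 / √x) ^ 2 - (1 / √(x + c)) ^ 2 := by ring
    _ = 1 / x - 1 / (x + c) := by
      rw [div_pow, div_pow, one_pow, Real.sq_sqrt hx.le, Real.sq_sqrt hxc.le]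
    _ = c / (x * (x + c)) := by field_simp; ring
    _ ≤ c / x ^ 2 := by rw [sq]; gcongr; linarith

lemma summable_inv_sqrt_sub_inv_sqrt_add_sq {c : ℝ} (hc : 0 ≤ c) :
    Summable fun n : ℕ => (1 / √((n : ℝ) + 1) - 1 / √((n : ℝ) + 1 + c)) ^ 2 := by
  have h : Summable fun n : ℕ => c / ((n : ℝ) + 1) ^ 2 := by
    simpa [div_eq_mul_one_div c] using
      ((summable_nat_add_iff 1).mpr (Real.summable_one_div_nat_pow.mpr one_lt_two)).mul_left c
  exact h.of_nonneg_of_le (fun _ => sq_nonneg _)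
    fun n => inv_sqrt_sub_inv_sqrt_add_sq_le (by positivity) hc

lemma count_mem_univ [DecidablePred (· ∈ (univ : Set ℕ))] (n : ℕ) :
    Nat.count (· ∈ (univ : Set ℕ)) n = n :=
  Nat.count_of_forall fun _ _ => mem_univ _

lemma count_mem_Ici_add (k : ℕ) [DecidablePred (· ∈ Ici k)] (n : ℕ) :
    Nat.count (· ∈ Ici k) (n + k) = n := by
  rw [Nat.count_add', Nat.count_of_forall_not (p := (· ∈ Ici k)) fun m hm => not_le.mpr hm,
    Nat.count_of_forall (p := fun m => m + k ∈ Ici k) fun _ _ => mem_Ici.mpr le_add_self, add_zero]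

lemma alphaSeq_of_mem {x : Set ℕ} [DecidablePred (· ∈ x)] {n : ℕ} (hn : n ∈ x) :
    alphaSeq x n = 1 / 4 + 1 / (2 * √((Nat.count (· ∈ x) n : ℝ) + 1)) := by
  rw [alphaSeq, if_pos hn]
  congr!

lemma alphaSeq_univ (n : ℕ) : alphaSeq univ n = 1 / 4 + 1 / (2 * √((n : ℝ) + 1)) := by
  classical
  rw [alphaSeq_of_mem (mem_univ n), count_mem_univ]

lemma alphaSeq_Ici_add (k n : ℕ) :
    alphaSeq (Ici k) (n + k) = 1 / 4 + 1 / (2 * √((n : ℝ) + 1)) := by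
  classical
  rw [alphaSeq_of_mem (x := Ici k) (mem_Ici.mpr le_add_self), count_mem_Ici_add]

lemma rho_Ici_univ_lt_top (k : ℕ) : rho (Ici k) univ < ⊤ := by
  have h : Summable fun n => (alphaSeq (Ici k) n - alphaSeq univ n) ^ 2 := by
    refine (summable_nat_add_iff k).mp
      (((summable_inv_sqrt_sub_inv_sqrt_add_sq k.cast_nonneg).mul_left (1 / 4)).congr fun n => ?_)
    rw [alphaSeq_Ici_add, alphaSeq_univ, Nat.cast_add]
    ring_nf
  exact h.tsum_ofReal_lt_top

lemma Ici_mem_Fset (k : ℕ) : Ici k ∈ Fset :=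
  ⟨Ici_infinite k, rho_Ici_univ_lt_top k⟩

/-- For every `k`, the tail `ω∖k = {n : k ≤ n}` belongs to `F`: the series
`Σ_{n ≥ k} (1/√(n+1) − 1/√(n+1−k))²` converges, and hence `ρ(ω∖k, ω) < ∞`. -/
theorem tail_mem_Fset (k : ℕ) :
    (∑' n : {n : ℕ // k ≤ n},
        ENNReal.ofReal
          ((1 / Real.sqrt (((n : ℕ) : ℝ) + 1)
            - 1 / Real.sqrt (((n : ℕ) : ℝ) + 1 - (k : ℝ)))^2)) < ⊤ ∧
    {n : ℕ | k ≤ n} ∈ Fset := by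
  have hsummable : Summable fun n : ℕ => (1 / √((n : ℝ) + 1) - 1 / √((n : ℝ) + 1 - k)) ^ 2 := by
    refine (summable_nat_add_iff k).mp ((summable_inv_sqrt_sub_inv_sqrt_add_sq k.cast_nonneg).congr
      fun n => ?_)
    rw [sub_sq_comm, Nat.cast_add]
    ring_nf
  exact ⟨(hsummable.subtype _).tsum_ofReal_lt_top, Ici_mem_Fset k⟩

end
end
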